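/- arXiv:math/0608270 — 3 statements merged into one kernel-verified Lean document; each statement's English description precedes it below -/
import Mathlib

section
/- Let C be an arrovian voting system on at least three alternatives. If a subset J ⊆ I is strongly decisive, then the voters in the complement I \ J have no influence on the outcome: for any two profiles P, P' that agree on J (i.e., P_j = P'_j for all j ∈ J), C(P) = C(P'). -/
variable {A I : Type*}

/-- A partial preorder: a reflexive and transitive binary relation. -/
def IsPPO (P : A → A → Prop) : Prop := Reflexive P ∧ Transitive P

/-- A linear (total) preorder: reflexive, transitive and complete. -/
def IsLPO (P : A → A → Prop) : Prop := Reflexive P ∧ Transitive P ∧ ∀ a b, P a b ∨ P b a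

/-- A profile of partial preorders. -/
def IsPPOProfile (P : I → A → A → Prop) : Prop := ∀ i, IsPPO (P i)

/-- A profile of linear (total) preorders. -/
def IsLPOProfile (P : I → A → A → Prop) : Prop := ∀ i, IsLPO (P i)

/-- Strict preference. -/
def StrictPref (P : A → A → Prop) (a b : A) : Prop := P a b ∧ ¬ P b a

/-- Indifference. -/
def Indiff (P : A → A → Prop) (a b : A) : Prop := P a b ∧ P b a

/-- The set `A` contains at least three distinct alternatives. -/
def ThreeAlts (A : Type*) : Prop := ∃ a b c : A, a ≠ b ∧ b ≠ c ∧ a ≠ c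

/-- Unanimity. -/
def Unanimity (C : (I → A → A → Prop) → A → A → Prop) : Prop :=
  ∀ P, IsPPOProfile P → ∀ a b : A, (∀ i, P i a b) → C P a b

/-- Independence of irrelevant alternatives. -/
def IIA (C : (I → A → A → Prop) → A → A → Prop) : Prop :=
  ∀ P P' : I → A → A → Prop, IsPPOProfile P → IsPPOProfile P' → ∀ a b : A,
    {i | P i a b} = {i | P' i a b} → {i | P i b a} = {i | P' i b a} →
    (C P a b ↔ C P' a b)

/-- Neutrality: `C (ρ*P) = ρ*(C P)` for every permutation `ρ` of the alternatives. -/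
def Neutrality (C : (I → A → A → Prop) → A → A → Prop) : Prop :=
  ∀ (ρ : Equiv.Perm A) (P : I → A → A → Prop), IsPPOProfile P →
    ∀ x y : A, C (fun i a b => P i (ρ.symm a) (ρ.symm b)) x y ↔ C P (ρ.symm x) (ρ.symm y)

/-- Monotonicity. -/
def Monotonicity (C : (I → A → A → Prop) → A → A → Prop) : Prop :=
  ∀ P P' : I → A → A → Prop, IsPPOProfile P → IsPPOProfile P' → ∀ a b : A,
    {i | P i a b} ⊆ {i | P' i a b} → {i | P' i b a} ⊆ {i | P i b a} →
    C P a b → C P' a b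

/-- `J` is a decisive set: unanimous strict preference on `J` forces weak aggregate preference. -/
def Decisive (C : (I → A → A → Prop) → A → A → Prop) (J : Set I) : Prop :=
  ∀ P, IsPPOProfile P → ∀ a b : A, (∀ j ∈ J, StrictPref (P j) a b) → C P a b

/-- `J` is a strongly decisive set: unanimous weak preference on `J` forces weak aggregate preference. -/
def SDecisive (C : (I → A → A → Prop) → A → A → Prop) (J : Set I) : Prop :=
  ∀ P, IsPPOProfile P → ∀ a b : A, (∀ j ∈ J, P j a b) → C P a b

/-
Fix a third alternative `c`. In an auxiliary profile `Q` every voter compares `a` with `b` as in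
`P`, and `c` with `b` as they compare `a` with `b` in `P'`, while the voters of `J` are indifferent
between `c` and `a`. If `a ≽ b` in `C P`, IIA gives `a ≽ b` in `C Q` and strong decisiveness
`c ≽ a`, hence `c ≽ b`. Turning `c` into a clone of `a` in `P'` gives a profile that agrees with
`Q` on `{b, c}` and in which unanimity yields `a ≽ c`; so `a ≽ b` there, and by IIA in `C P'`.
-/

open Function

lemma IsPPO.invImage {B : Type*} {P : A → A → Prop} (hP : IsPPO P) (f : B → A) :
    IsPPO (InvImage P f) :=
  ⟨fun x => hP.1 (f x), fun _ _ _ h₁ h₂ => hP.2 h₁ h₂⟩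

lemma IsPPO.inf {P Q : A → A → Prop} (hP : IsPPO P) (hQ : IsPPO Q) : IsPPO (P ⊓ Q) :=
  ⟨fun x => ⟨hP.1 x, hQ.1 x⟩, fun _ _ _ h₁ h₂ => ⟨hP.2 h₁.1 h₂.1, hQ.2 h₁.2 h₂.2⟩⟩

lemma ThreeAlts.exists_ne_ne (hA : ThreeAlts A) (a b : A) : ∃ c, c ≠ a ∧ c ≠ b := by
  obtain ⟨x, y, z, hxy, hyz, hxz⟩ := hA
  by_contra! h
  have key : ∀ u v, u ≠ v → u = a ∨ v = a := fun u v huv => by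
    by_contra! hne
    exact huv ((h u hne.1).trans (h v hne.2).symm)
  grind [key x y hxy, key y z hyz, key x z hxz]

lemma IIA.iff_of_forall_iff {C : (I → A → A → Prop) → A → A → Prop} (hIIA : IIA C)
    {P P' : I → A → A → Prop} (hP : IsPPOProfile P) (hP' : IsPPOProfile P') {a b : A}
    (hab : ∀ i, P i a b ↔ P' i a b) (hba : ∀ i, P i b a ↔ P' i b a) :
    C P a b ↔ C P' a b :=
  hIIA P P' hP hP' a b (Set.ext hab) (Set.ext hba)

open Classical in
lemma SDecisive.imp_of_eqOn {C : (I → A → A → Prop) → A → A → Prop} {J : Set I}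
    (hJ : SDecisive C J) (hC : ∀ P, IsPPOProfile P → Transitive (C P)) (hU : Unanimity C)
    (hIIA : IIA C) {P P' : I → A → A → Prop} (hP : IsPPOProfile P) (hP' : IsPPOProfile P')
    (hagree : Set.EqOn P P' J) {a b c : A} (hca : c ≠ a) (hcb : c ≠ b)
    (h : C P a b) : C P' a b := by
  let σ : A → A := update id c a
  let f : A → A := update id c b
  let g : A → A := fun x => if x = c then a else b
  let Q : I → A → A → Prop := fun i =>
    if i ∈ J then InvImage (P i) σ else InvImage (P i) f ⊓ InvImage (P' i) g
  let Q' : I → A → A → Prop := fun i => InvImage (P' i) σ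
  have hQ : IsPPOProfile Q := fun i => by
    by_cases hi : i ∈ J
    · simpa [Q, hi] using (hP i).invImage σ
    · simpa [Q, hi] using ((hP i).invImage f).inf ((hP' i).invImage g)
  have hQ' : IsPPOProfile Q' := fun i => (hP' i).invImage σ
  have hσ : σ a = a ∧ σ b = b ∧ σ c = a := by simp [σ, hca.symm, hcb.symm]
  have hf : f a = a ∧ f b = b ∧ f c = b := by simp [f, hca.symm, hcb.symm]
  have hg : g a = b ∧ g b = b ∧ g c = a := by simp [g, hca.symm, hcb.symm]
  have hQab : C Q a b := by
    refine (hIIA.iff_of_forall_iff hP hQ (fun i => ?_) (fun i => ?_)).mp h <;>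
      by_cases hi : i ∈ J <;> simp [Q, hi, InvImage, hσ, hf, hg, (hP' i).1 b]
  have hQca : C Q c a := hJ Q hQ c a fun j hj => by
    simpa [Q, hj, InvImage, hσ] using (hP j).1 a
  have hQ'cb : C Q' c b := by
    have hQQ' : ∀ i, (Q i c b ↔ Q' i c b) ∧ (Q i b c ↔ Q' i b c) := fun i => by
      by_cases hi : i ∈ J
      · simp [Q, Q', hi, InvImage, hσ, hagree hi]
      · simp [Q, Q', hi, InvImage, hσ, hf, hg, (hP i).1 b]
    exact (hIIA.iff_of_forall_iff hQ hQ' (fun i => (hQQ' i).1) (fun i => (hQQ' i).2)).mp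
      (hC Q hQ hQca hQab)
  have hQ'ac : C Q' a c := hU Q' hQ' a c fun i => by
    simpa [Q', InvImage, hσ] using (hP' i).1 a
  refine (hIIA.iff_of_forall_iff hQ' hP' (fun i => ?_) (fun i => ?_)).mp (hC Q' hQ' hQ'ac hQ'cb) <;>
    simp [Q', InvImage, hσ]

theorem exclusion_property_general (C : (I → A → A → Prop) → A → A → Prop)
    (hA : ThreeAlts A)
    (hC : ∀ P, IsPPOProfile P → IsPPO (C P))
    (hU : Unanimity C) (hIIA : IIA C)
    (J : Set I) (hJ : SDecisive C J) :
    ∀ P P' : I → A → A → Prop, IsPPOProfile P → IsPPOProfile P' →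
      (∀ j ∈ J, P j = P' j) → C P = C P' := by
  intro P P' hP hP' hagree
  funext a b
  obtain ⟨c, hca, hcb⟩ := hA.exists_ne_ne a b
  have hC_trans : ∀ P, IsPPOProfile P → Transitive (C P) := fun P hP => (hC P hP).2
  exact propext
    ⟨hJ.imp_of_eqOn hC_trans hU hIIA hP hP' hagree hca hcb,
      hJ.imp_of_eqOn hC_trans hU hIIA hP' hP (fun j hj => (hagree j hj).symm) hca hcb⟩

theorem exclusion_property [Fintype I] (C : (I → A → A → Prop) → A → A → Prop)
    (hA : ThreeAlts A)
    (hC : ∀ P, IsPPOProfile P → IsPPO (C P))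
    (hU : Unanimity C) (hIIA : IIA C)
    (J : Set I) (hJ : SDecisive C J) :
    ∀ P P' : I → A → A → Prop, IsPPOProfile P → IsPPOProfile P' →
      (∀ j ∈ J, P j = P' j) → C P = C P' :=
  exclusion_property_general C hA hC hU hIIA J hJ
end

section
/- An arrovian voting system C on at least three alternatives satisfies strict unanimity if and only if its minimal decisive set K is nonempty (equivalently, C is non-trivial); and C satisfies strong unanimity if and only if its minimal strongly decisive set J equals I. -/
variable {A I : Type*}

/-!
If everyone weakly prefers `a` to `b` but society weakly prefers `b` to `a`, then by IIA the
voters `T` who also weakly prefer `b` to `a` can block every strict social preference of `a`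
over `b` that everybody else holds. As in Arrow's theorem, inserting a third alternative and
using transitivity spreads this power from the pair `(a, b)` to every pair, so `T` is strongly
decisive. A failure of strict unanimity gives such a `T` that is empty, so `∅` is decisive and
`K = ∅`; a failure of strong unanimity gives one missing the strictly preferring voter, so
`J ≠ I`. Conversely, profiles in which everybody outside some set puts `a` strictly on top
witness the failures when `K = ∅` or `J ≠ I`.
-/

theorem ThreeAlts.exists_ne_ne_s12 (hA : ThreeAlts A) (x y : A) : ∃ z, z ≠ x ∧ z ≠ y := by
  obtain ⟨a, b, c, hab, hbc, hac⟩ := hA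
  by_contra! h
  have key : ∀ z, z = x ∨ z = y := fun z => (em (z = x)).imp_right (h z)
  grind [key a, key b, key c]

theorem IsPPO.eq : IsPPO (@Eq A) := ⟨fun _ => rfl, fun _ _ _ => Eq.trans⟩

theorem IsPPO.top : IsPPO fun _ _ : A => True := ⟨fun _ => trivial, fun _ _ _ _ _ => trivial⟩

theorem IsPPO.flip {P : A → A → Prop} (hP : IsPPO P) : IsPPO (flip P) :=
  ⟨fun a => hP.1 a, fun _ _ _ hab hbc => hP.2 hbc hab⟩

theorem IsPPO.onFun {B : Type*} {P : B → B → Prop} (hP : IsPPO P) (f : A → B) :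
    IsPPO (Function.onFun P f) :=
  ⟨fun a => hP.1 (f a), fun _ _ _ hab hbc => hP.2 hab hbc⟩

def raiseTop (P : A → A → Prop) (z : A) : A → A → Prop := fun u v => u = z ∨ (v ≠ z ∧ P u v)

theorem IsPPO.raiseTop {P : A → A → Prop} (hP : IsPPO P) (z : A) : IsPPO (raiseTop P z) := by
  refine ⟨fun a => ?_, fun u v w huv hvw => ?_⟩
  · by_cases ha : a = z
    exacts [Or.inl ha, Or.inr ⟨ha, hP.1 a⟩]
  · rcases huv with rfl | ⟨hvz, huv⟩
    · exact Or.inl rfl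
    · rcases hvw with rfl | ⟨hwz, hvw⟩
      exacts [absurd rfl hvz, Or.inr ⟨hwz, hP.2 huv hvw⟩]

open Classical in
def topProfile (S : Set I) (a : A) : I → A → A → Prop :=
  fun i => if i ∈ S then fun _ _ => True else raiseTop Eq a

theorem isPPOProfile_topProfile (S : Set I) (a : A) : IsPPOProfile (topProfile S a) := by
  intro i
  by_cases hi : i ∈ S
  · simpa [topProfile, hi] using IsPPO.top
  · simpa [topProfile, hi] using IsPPO.eq.raiseTop a

theorem topProfile_top (S : Set I) (a b : A) (i : I) : topProfile S a i a b := by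
  by_cases hi : i ∈ S <;> simp [topProfile, hi, raiseTop]

theorem topProfile_of_mem {S : Set I} {i : I} (hi : i ∈ S) {a : A} (u v : A) :
    topProfile S a i u v := by
  simp [topProfile, hi]

theorem strictPref_topProfile {S : Set I} {i : I} (hi : i ∉ S) {a b : A} (hb : b ≠ a) :
    StrictPref (topProfile S a i) a b := by
  simpa [StrictPref, topProfile, hi, raiseTop] using hb

variable {C : (I → A → A → Prop) → A → A → Prop}

structure IsArrovian (C : (I → A → A → Prop) → A → A → Prop) : Prop where
  ppo : ∀ P, IsPPOProfile P → IsPPO (C P)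
  unanimity : Unanimity C
  iia : IIA C

theorem SDecisive.decisive {S : Set I} (h : SDecisive C S) : Decisive C S :=
  fun P hP a b hS => h P hP a b fun j hj => (hS j hj).1

theorem IsArrovian.sDecisive_univ (hC : IsArrovian C) : SDecisive C Set.univ :=
  fun P hP a b h => hC.unanimity P hP a b fun i => h i trivial

/-- `T` can block a strict social preference for `x` over `y` held by everybody else. -/
def Vetoes (C : (I → A → A → Prop) → A → A → Prop) (T : Set I) (x y : A) : Prop :=
  ∀ P, IsPPOProfile P → (∀ i, P i x y) → (∀ i, P i y x ↔ i ∈ T) → C P y x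

def SDecisiveOn (C : (I → A → A → Prop) → A → A → Prop) (T : Set I) (x y : A) : Prop :=
  ∀ Q, IsPPOProfile Q → (∀ i ∈ T, Q i x y) → C Q x y

theorem SDecisiveOn.vetoes {T : Set I} {x y : A} (h : SDecisiveOn C T x y) : Vetoes C T y x :=
  fun P hP _ hT => h P hP fun i hi => (hT i).2 hi

theorem IsArrovian.vetoes {P : I → A → A → Prop} {a b : A} (hC : IsArrovian C)
    (hP : IsPPOProfile P) (hab : ∀ i, P i a b) (hba : C P b a) : Vetoes C {i | P i b a} a b :=
  fun P' hP' hab' hba' => (hC.iia P P' hP hP' b a (Set.ext hba').symm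
    (Set.ext fun i => iff_of_true (hab i) (hab' i))).1 hba

/-- In a profile where `z` copies `x` for the members of `T` and sits on top for everyone else,
`T` makes society rank `x` above `z`, and unanimity ranks `z` above `y`. -/
theorem IsArrovian.sDecisiveOn_of_vetoes {T : Set I} {x y z : A} (hC : IsArrovian C)
    (hzx : z ≠ x) (hzy : z ≠ y) (h : Vetoes C T z x) : SDecisiveOn C T x y := by
  classical
  intro Q hQ hT
  let R : I → A → A → Prop := fun i =>
    if i ∈ T then Function.onFun (Q i) (Function.update id z x) else raiseTop (Q i) z
  have hR : IsPPOProfile R := fun i => by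
    by_cases hi : i ∈ T
    · simpa [R, hi] using (hQ i).onFun (Function.update id z x)
    · simpa [R, hi] using (hQ i).raiseTop z
  have hRxz : C R x z := h R hR
    (fun i => by
      by_cases hi : i ∈ T <;> simp [R, hi, raiseTop, Function.onFun, (hQ i).1 x, hzx.symm])
    (fun i => by
      by_cases hi : i ∈ T <;> simp [R, hi, raiseTop, Function.onFun, (hQ i).1 x, hzx.symm])
  have hRzy : C R z y := hC.unanimity R hR z y fun i => by
    by_cases hi : i ∈ T <;> simp [R, hi, raiseTop, Function.onFun, hzy.symm, hT i]
  refine (hC.iia R Q hR hQ x y ?_ ?_).1 ((hC.ppo R hR).2 hRxz hRzy) <;> ext i <;>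
    by_cases hi : i ∈ T <;> simp [R, hi, raiseTop, Function.onFun, hzx.symm, hzy.symm]

theorem IsArrovian.sDecisiveOn_from {T : Set I} {x z : A} (hA : ThreeAlts A) (hC : IsArrovian C)
    (hzx : z ≠ x) (h : Vetoes C T z x) {y : A} (hyx : y ≠ x) : SDecisiveOn C T x y := by
  rcases ne_or_eq z y with hzy | rfl
  · exact hC.sDecisiveOn_of_vetoes hzx hzy h
  · obtain ⟨w, hwx, hwz⟩ := hA.exists_ne_ne_s12 x z
    exact hC.sDecisiveOn_of_vetoes hwx hwz (hC.sDecisiveOn_of_vetoes hzx hwz.symm h).vetoes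

def dual (C : (I → A → A → Prop) → A → A → Prop) : (I → A → A → Prop) → A → A → Prop :=
  fun P a b => C (fun i => flip (P i)) b a

theorem IsPPOProfile.flip {P : I → A → A → Prop} (hP : IsPPOProfile P) :
    IsPPOProfile fun i => flip (P i) :=
  fun i => (hP i).flip

theorem IsArrovian.dual (hC : IsArrovian C) : IsArrovian (dual C) where
  ppo _ hP := (hC.ppo _ hP.flip).flip
  unanimity _ hP a b h := hC.unanimity _ hP.flip b a h
  iia _ _ hP hP' a b hab hba := hC.iia _ _ hP.flip hP'.flip b a hab hba

theorem Vetoes.dual {T : Set I} {x y : A} (h : Vetoes C T x y) : Vetoes (dual C) T y x :=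
  fun _ hP hyx hxy => h _ hP.flip hyx hxy

theorem SDecisiveOn.of_dual {T : Set I} {x y : A} (h : SDecisiveOn (dual C) T y x) :
    SDecisiveOn C T x y :=
  fun _ hQ hT => h _ hQ.flip hT

theorem IsArrovian.sDecisiveOn_to {T : Set I} {y z : A} (hA : ThreeAlts A) (hC : IsArrovian C)
    (hzy : z ≠ y) (h : Vetoes C T y z) {x : A} (hxy : x ≠ y) : SDecisiveOn C T x y :=
  (hC.dual.sDecisiveOn_from hA hzy h.dual hxy).of_dual

theorem IsArrovian.sDecisive_of_vetoes {T : Set I} {a b : A} (hA : ThreeAlts A)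
    (hC : IsArrovian C) (hab : a ≠ b) (h : Vetoes C T a b) : SDecisive C T := by
  have hto : ∀ x y, x ≠ y → y ≠ b → SDecisiveOn C T x y := fun x y hxy hyb =>
    hC.sDecisiveOn_to hA hyb.symm (hC.sDecisiveOn_from hA hab h hyb).vetoes hxy
  intro Q hQ x y hT
  rcases eq_or_ne x y with rfl | hxy
  · exact (hC.ppo Q hQ).1 x
  rcases ne_or_eq y b with hyb | rfl
  · exact hto x y hxy hyb Q hQ hT
  · obtain ⟨c, hcx, hcy⟩ := hA.exists_ne_ne_s12 x y
    exact hC.sDecisiveOn_from hA hcx (hto x c hcx.symm hcy).vetoes hxy.symm Q hQ hT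

theorem IsArrovian.sDecisive_of_reversal {P : I → A → A → Prop} {a b : A} (hA : ThreeAlts A)
    (hC : IsArrovian C) (hP : IsPPOProfile P) (hab : ∀ i, P i a b) (hba : C P b a) :
    SDecisive C {i | P i b a} := by
  rcases eq_or_ne a b with rfl | hne
  · simpa only [(hP _).1 a, Set.setOf_true] using hC.sDecisive_univ
  · exact hC.sDecisive_of_vetoes hA hne (hC.vetoes hP hab hba)

theorem strict_and_strong_unanimity_general (C : (I → A → A → Prop) → A → A → Prop)
    (hA : ThreeAlts A)
    (hC : ∀ P, IsPPOProfile P → IsPPO (C P))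
    (hU : Unanimity C) (hIIA : IIA C)
    (K J : Set I)
    (hK : Decisive C K ∧ ∀ K' : Set I, Decisive C K' → K ⊆ K')
    (hJ : SDecisive C J ∧ ∀ J' : Set I, SDecisive C J' → J ⊆ J') :
    ((∀ P : I → A → A → Prop, IsPPOProfile P → ∀ a b : A,
        (∀ i, StrictPref (P i) a b) → StrictPref (C P) a b) ↔ K.Nonempty) ∧
    ((∀ P : I → A → A → Prop, IsPPOProfile P → ∀ a b : A,
        (∀ i, P i a b) → (∃ j, StrictPref (P j) a b) → StrictPref (C P) a b) ↔
      J = Set.univ) := by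
  have hArr : IsArrovian C := ⟨hC, hU, hIIA⟩
  obtain ⟨a, b, -, hab, -, -⟩ := id hA
  refine ⟨⟨fun hStrict => ?_, fun ⟨k, hk⟩ P hP x y hxy => ?_⟩,
    ⟨fun hStrong => ?_, fun hJuniv P hP x y hxy ⟨j, hj⟩ => ?_⟩⟩
  · rw [Set.nonempty_iff_ne_empty]
    rintro rfl
    have hP := isPPOProfile_topProfile (∅ : Set I) a
    exact (hStrict _ hP a b fun i => strictPref_topProfile (Set.notMem_empty i) hab.symm).2
      (hK.1 _ hP b a nofun)
  · refine ⟨hU P hP x y fun i => (hxy i).1, fun hyx => ?_⟩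
    have hD : Decisive C ∅ := by
      simpa only [fun i => (hxy i).2, Set.setOf_false] using
        (hArr.sDecisive_of_reversal hA hP (fun i => (hxy i).1) hyx).decisive
    exact hK.2 ∅ hD hk
  · by_contra hJne
    obtain ⟨j, hj⟩ := (Set.ne_univ_iff_exists_notMem J).1 hJne
    have hP := isPPOProfile_topProfile {j}ᶜ a
    have hPj : StrictPref (topProfile {j}ᶜ a j) a b := strictPref_topProfile (by simp) hab.symm
    exact (hStrong _ hP a b (topProfile_top _ a b) ⟨j, hPj⟩).2
      (hJ.1 _ hP b a fun i hi => topProfile_of_mem (by rintro rfl; exact hj hi) b a)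
  · exact ⟨hU P hP x y hxy, fun hyx =>
      hj.2 (hJ.2 _ (hArr.sDecisive_of_reversal hA hP hxy hyx) (hJuniv ▸ Set.mem_univ j))⟩

theorem strict_and_strong_unanimity [Fintype I] (C : (I → A → A → Prop) → A → A → Prop)
    (hA : ThreeAlts A)
    (hC : ∀ P, IsPPOProfile P → IsPPO (C P))
    (hU : Unanimity C) (hIIA : IIA C)
    (K J : Set I)
    (hK : Decisive C K ∧ ∀ K' : Set I, Decisive C K' → K ⊆ K')
    (hJ : SDecisive C J ∧ ∀ J' : Set I, SDecisive C J' → J ⊆ J') :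
    ((∀ P : I → A → A → Prop, IsPPOProfile P → ∀ a b : A,
        (∀ i, StrictPref (P i) a b) → StrictPref (C P) a b) ↔ K.Nonempty) ∧
    ((∀ P : I → A → A → Prop, IsPPOProfile P → ∀ a b : A,
        (∀ i, P i a b) → (∃ j, StrictPref (P j) a b) → StrictPref (C P) a b) ↔
      J = Set.univ) :=
  strict_and_strong_unanimity_general C hA hC hU hIIA K J hK hJ
end

section
/- Let C : PPO_A^I → PPO_A be an arrovian voting system on at least three alternatives, and let δN be the minimal decisive set relative to N, with ΔN = δN ∪ N. Then Δ satisfies: (1) N ⊆ ΔN and ΔM ⊆ ΔN for M ⊆ N; (2) if ΔN ∩ M = ∅ then Δ(N ⊔ M) = ΔN ⊔ M; and (3) a ≽ b in the aggregate iff there exists N ⊆ I with a ≈_N b and a ≻_{δN} b. Moreover, Δ is the unique map 2^I → 2^I with these three properties. -/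
variable {A I : Type*}

/-- `J` is decisive relative to `N`: if all members of `N` are indifferent and all members
of `J` strictly prefer `a` to `b`, then `a ≽ b` in the aggregate. -/
def RelDecisive (C : (I → A → A → Prop) → A → A → Prop) (N J : Set I) : Prop :=
  ∀ P, IsPPOProfile P → ∀ a b : A,
    (∀ i ∈ N, Indiff (P i) a b) → (∀ j ∈ J, StrictPref (P j) a b) → C P a b

/-- `δ` assigns to each `N ⊆ I` the minimal set `δ N ⊆ I \ N` decisive relative to `N`. -/
def MinRelDecisive (C : (I → A → A → Prop) → A → A → Prop) (δ : Set I → Set I) : Prop :=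
  ∀ N : Set I, δ N ⊆ Nᶜ ∧ RelDecisive C N (δ N) ∧
    ∀ J : Set I, J ⊆ Nᶜ → RelDecisive C N J → δ N ⊆ J

/-- The three characteristic properties of the coalition structure map `Δ`. -/
def CoalStruct (C : (I → A → A → Prop) → A → A → Prop) (Δ : Set I → Set I) : Prop :=
  ((∀ N : Set I, N ⊆ Δ N) ∧ (∀ M N : Set I, M ⊆ N → Δ M ⊆ Δ N)) ∧
  (∀ N M : Set I, Δ N ∩ M = ∅ → Δ (N ∪ M) = Δ N ∪ M) ∧
  (∀ P : I → A → A → Prop, IsPPOProfile P → ∀ a b : A,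
    C P a b ↔ ∃ N : Set I, (∀ i ∈ N, Indiff (P i) a b) ∧
      ∀ j ∈ Δ N \ N, StrictPref (P j) a b)


/-!
By IIA, whether `C P a b` holds depends only on the pair of coalitions
`({i | P i a b}, {i | P i b a})`. With a third alternative, transitivity of `C P` and unanimity
carry a winning pair of coalitions from one pair of alternatives to every other pair, make
winning monotone in both coalitions, and let voters for whom `a` and `b` are incomparable count
against `a`. Hence `J` is decisive relative to `N` exactly when `(N ∪ J, Jᶜ)` wins, so relative
decisiveness is monotone, and minimality of `δ` yields the three properties of `Δ`.
Conversely, (3) makes `Δ' N \ N` decisive relative to `N`, so `δ N ⊆ Δ' N`; and applying (3)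
to the profile in which `N` is indifferent, `δ N` prefers `a` and everybody else prefers `b`
yields `M ⊆ N` with `Δ' M \ M ⊆ δ N`, whence `Δ' N = Δ' M ∪ (N \ M) ⊆ Δ N` by (2).
-/

structure IsArrovian_s14 (C : (I → A → A → Prop) → A → A → Prop) : Prop where
  isPPO : ∀ P, IsPPOProfile P → IsPPO (C P)
  unanimity : Unanimity C
  iia : IIA C

lemma ThreeAlts.exists_ne_ne_s14 (hA : ThreeAlts A) (u v : A) : ∃ w : A, w ≠ u ∧ w ≠ v := by
  obtain ⟨p, q, r, hpq, hqr, hpr⟩ := hA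
  by_contra! h
  have huv : ∀ w, w = u ∨ w = v := fun w => (em (w = u)).imp_right (h w)
  rcases huv p with rfl | rfl <;> rcases huv q with rfl | rfl <;> rcases huv r with rfl | rfl <;>
    simp_all

section Profiles

variable {a b c : A}

/-- Voters in `N` are indifferent between `a` and `b`, voters in `J` strictly prefer `a`, and all
other voters strictly prefer `b`. -/
def pairProfile (a b : A) (N J : Set I) : I → A → A → Prop :=
  fun i x y => x = y ∨ (x = a ∧ y = b ∧ i ∈ N ∪ J) ∨ (x = b ∧ y = a ∧ i ∉ J)

lemma isPPOProfile_pairProfile (a b : A) (N J : Set I) : IsPPOProfile (pairProfile a b N J) :=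
  fun _ => ⟨fun _ => Or.inl rfl, fun _ _ _ hxy hyz => by grind [pairProfile]⟩

lemma pairProfile_apply_left (hab : a ≠ b) {N J : Set I} {i : I} :
    pairProfile a b N J i a b ↔ i ∈ N ∪ J := by
  simp [pairProfile, hab, hab.symm]

lemma pairProfile_apply_right (hab : a ≠ b) {N J : Set I} {i : I} :
    pairProfile a b N J i b a ↔ i ∉ J := by
  simp [pairProfile, hab, hab.symm]

lemma indiff_pairProfile (hab : a ≠ b) {N J : Set I} (hJ : J ⊆ Nᶜ) {i : I} :
    Indiff (pairProfile a b N J i) a b ↔ i ∈ N := by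
  have := @hJ i
  simp only [Indiff, pairProfile_apply_left hab, pairProfile_apply_right hab, Set.mem_union,
    Set.mem_compl_iff] at *
  tauto

lemma strictPref_pairProfile (hab : a ≠ b) {N J : Set I} {i : I} :
    StrictPref (pairProfile a b N J i) a b ↔ i ∈ J := by
  simp only [StrictPref, pairProfile_apply_left hab, pairProfile_apply_right hab]
  tauto

def triProfile (a b c : A) (Sab Sba Sac Sca Sbc Scb : Set I) : I → A → A → Prop :=
  fun i x y => x = y ∨ (x = a ∧ y = b ∧ i ∈ Sab) ∨ (x = b ∧ y = a ∧ i ∈ Sba)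
    ∨ (x = a ∧ y = c ∧ i ∈ Sac) ∨ (x = c ∧ y = a ∧ i ∈ Sca)
    ∨ (x = b ∧ y = c ∧ i ∈ Sbc) ∨ (x = c ∧ y = b ∧ i ∈ Scb)

variable {Sab Sba Sac Sca Sbc Scb : Set I}

lemma isPPOProfile_triProfile
    (h₁ : Sab ∩ Sbc ⊆ Sac) (h₂ : Sac ∩ Scb ⊆ Sab) (h₃ : Sba ∩ Sac ⊆ Sbc)
    (h₄ : Sbc ∩ Sca ⊆ Sba) (h₅ : Sca ∩ Sab ⊆ Scb) (h₆ : Scb ∩ Sba ⊆ Sca) :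
    IsPPOProfile (triProfile a b c Sab Sba Sac Sca Sbc Scb) := by
  refine fun i => ⟨fun _ => Or.inl rfl, fun x y z hxy hyz => ?_⟩
  have := @h₁ i; have := @h₂ i; have := @h₃ i; have := @h₄ i; have := @h₅ i; have := @h₆ i
  simp only [Set.mem_inter_iff] at *
  grind [triProfile]

lemma setOf_triProfile_ab (hab : a ≠ b) (hac : a ≠ c) (hbc : b ≠ c) :
    {i | triProfile a b c Sab Sba Sac Sca Sbc Scb i a b} = Sab := by
  ext; grind [triProfile]

lemma setOf_triProfile_ba (hab : a ≠ b) (hac : a ≠ c) (hbc : b ≠ c) :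
    {i | triProfile a b c Sab Sba Sac Sca Sbc Scb i b a} = Sba := by
  ext; grind [triProfile]

lemma setOf_triProfile_ac (hab : a ≠ b) (hac : a ≠ c) (hbc : b ≠ c) :
    {i | triProfile a b c Sab Sba Sac Sca Sbc Scb i a c} = Sac := by
  ext; grind [triProfile]

lemma setOf_triProfile_ca (hab : a ≠ b) (hac : a ≠ c) (hbc : b ≠ c) :
    {i | triProfile a b c Sab Sba Sac Sca Sbc Scb i c a} = Sca := by
  ext; grind [triProfile]

lemma setOf_triProfile_bc (hab : a ≠ b) (hac : a ≠ c) (hbc : b ≠ c) :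
    {i | triProfile a b c Sab Sba Sac Sca Sbc Scb i b c} = Sbc := by
  ext; grind [triProfile]

lemma setOf_triProfile_cb (hab : a ≠ b) (hac : a ≠ c) (hbc : b ≠ c) :
    {i | triProfile a b c Sab Sba Sac Sca Sbc Scb i c b} = Scb := by
  ext; grind [triProfile]

end Profiles

section Wins

variable (C : (I → A → A → Prop) → A → A → Prop)

def WinsAt (S T : Set I) (a b : A) : Prop :=
  ∀ P, IsPPOProfile P → {i | P i a b} = S → {i | P i b a} = T → C P a b

def Wins (S T : Set I) : Prop := ∀ a b : A, a ≠ b → WinsAt C S T a b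

variable {C} {S T : Set I} {a b c : A}

lemma IIA.winsAt (h : IIA C) {P : I → A → A → Prop} (hP : IsPPOProfile P) (hab : C P a b) :
    WinsAt C {i | P i a b} {i | P i b a} a b :=
  fun _ hP' hS hT => (h P _ hP hP' a b hS.symm hT.symm).mp hab

lemma IsArrovian_s14.winsAt_replace_right (hC : IsArrovian_s14 C) (hab : a ≠ b) (hac : a ≠ c)
    (h : WinsAt C S T a b) : WinsAt C S T a c := by
  rcases eq_or_ne b c with rfl | hbc
  · exact h
  set Q := triProfile a b c S T S T Set.univ Set.univ
  have hQ : IsPPOProfile Q := isPPOProfile_triProfile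
    Set.inter_subset_left Set.inter_subset_left (Set.subset_univ _)
    Set.inter_subset_right (Set.subset_univ _) Set.inter_subset_right
  have hQab : C Q a b := h Q hQ (setOf_triProfile_ab hab hac hbc) (setOf_triProfile_ba hab hac hbc)
  have hQbc : C Q b c := hC.unanimity Q hQ b c fun i => by simp [Q, triProfile]
  have := hC.iia.winsAt hQ ((hC.isPPO Q hQ).2 hQab hQbc)
  rwa [setOf_triProfile_ac hab hac hbc, setOf_triProfile_ca hab hac hbc] at this

lemma IsArrovian_s14.winsAt_replace_left (hC : IsArrovian_s14 C) (hab : a ≠ b) (hcb : c ≠ b)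
    (h : WinsAt C S T a b) : WinsAt C S T c b := by
  rcases eq_or_ne a c with rfl | hac
  · exact h
  set Q := triProfile a b c S T Set.univ Set.univ T S
  have hQ : IsPPOProfile Q := isPPOProfile_triProfile
    (Set.subset_univ _) Set.inter_subset_right Set.inter_subset_left Set.inter_subset_left
    Set.inter_subset_right (Set.subset_univ _)
  have hQab : C Q a b := h Q hQ (setOf_triProfile_ab hab hac hcb.symm)
    (setOf_triProfile_ba hab hac hcb.symm)
  have hQca : C Q c a := hC.unanimity Q hQ c a fun i => by simp [Q, triProfile]
  have := hC.iia.winsAt hQ ((hC.isPPO Q hQ).2 hQca hQab)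
  rwa [setOf_triProfile_cb hab hac hcb.symm, setOf_triProfile_bc hab hac hcb.symm] at this

lemma IsArrovian_s14.wins_of_winsAt (hA : ThreeAlts A) (hC : IsArrovian_s14 C) (hab : a ≠ b)
    (h : WinsAt C S T a b) : Wins C S T := by
  intro x y hxy
  obtain ⟨c, hca, hcx⟩ := hA.exists_ne_ne_s14 a x
  have hac : WinsAt C S T a c := hC.winsAt_replace_right hab hca.symm h
  have hxc : WinsAt C S T x c := hC.winsAt_replace_left hca.symm hcx.symm hac
  exact hC.winsAt_replace_right hcx.symm hxy hxc

lemma IsArrovian_s14.wins_of_apply (hA : ThreeAlts A) (hC : IsArrovian_s14 C)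
    {P : I → A → A → Prop} (hP : IsPPOProfile P) (hab : a ≠ b) (h : C P a b) :
    Wins C {i | P i a b} {i | P i b a} :=
  hC.wins_of_winsAt hA hab (hC.iia.winsAt hP h)

lemma Wins.mono (hA : ThreeAlts A) (hC : IsArrovian_s14 C) {S' T' : Set I} (h : Wins C S T)
    (hS : S ⊆ S') (hT : T' ⊆ T) : Wins C S' T' := by
  obtain ⟨a, b, c, hab, hbc, hac⟩ := id hA
  set Q := triProfile a b c S T S' T' Set.univ (S ∩ T')
  have hQ : IsPPOProfile Q := isPPOProfile_triProfile
    (fun i hi => hS hi.1) (fun i hi => hi.2.1) (Set.subset_univ _)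
    (fun i hi => hT hi.2) (fun i hi => ⟨hi.2, hi.1⟩) (fun i hi => hi.1.2)
  have hQab : C Q a b := h a b hab Q hQ (setOf_triProfile_ab hab hac hbc)
    (setOf_triProfile_ba hab hac hbc)
  have hQbc : C Q b c := hC.unanimity Q hQ b c fun i => by simp [Q, triProfile]
  have := hC.wins_of_apply hA hQ hac ((hC.isPPO Q hQ).2 hQab hQbc)
  rwa [setOf_triProfile_ac hab hac hbc, setOf_triProfile_ca hab hac hbc] at this

lemma Wins.union_compl (hA : ThreeAlts A) (hC : IsArrovian_s14 C) (h : Wins C S T) :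
    Wins C S (T ∪ Sᶜ) := by
  obtain ⟨a, b, c, hab, hbc, hac⟩ := id hA
  set Q := triProfile a b c S (T ∪ Sᶜ) S T (S ∩ T) (S ∪ T)
  have hQ : IsPPOProfile Q := isPPOProfile_triProfile
    (fun i hi => hi.1) (fun i hi => hi.1) (fun i ⟨hi, hiS⟩ => ⟨hiS, hi.resolve_right (· hiS)⟩)
    (fun i hi => Or.inl hi.2) (fun i hi => Or.inr hi.1)
    (fun i ⟨hi, hi'⟩ => hi'.elim id fun hiS => hi.resolve_left hiS)
  have hQac : C Q a c := h a c hac Q hQ (setOf_triProfile_ac hab hac hbc)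
    (setOf_triProfile_ca hab hac hbc)
  have hQcb : C Q c b := (h.mono hA hC Set.subset_union_left Set.inter_subset_right) c b hbc.symm
    Q hQ (setOf_triProfile_cb hab hac hbc) (setOf_triProfile_bc hab hac hbc)
  have := hC.wins_of_apply hA hQ hab ((hC.isPPO Q hQ).2 hQac hQcb)
  rwa [setOf_triProfile_ab hab hac hbc, setOf_triProfile_ba hab hac hbc] at this

end Wins

section RelDecisive

variable {C : (I → A → A → Prop) → A → A → Prop} {N J : Set I}

lemma RelDecisive.apply_pairProfile (h : RelDecisive C N J) (hJ : J ⊆ Nᶜ) {a b : A}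
    (hab : a ≠ b) : C (pairProfile a b N J) a b :=
  h _ (isPPOProfile_pairProfile a b N J) a b (fun _ hi => (indiff_pairProfile hab hJ).2 hi)
    (fun _ hj => (strictPref_pairProfile hab).2 hj)

lemma relDecisive_iff_wins (hA : ThreeAlts A) (hC : IsArrovian_s14 C) (hJ : J ⊆ Nᶜ) :
    RelDecisive C N J ↔ Wins C (N ∪ J) Jᶜ := by
  constructor
  · intro h
    obtain ⟨a, b, -, hab, -⟩ := id hA
    have := hC.wins_of_apply hA (isPPOProfile_pairProfile a b N J) hab (h.apply_pairProfile hJ hab)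
    simpa only [pairProfile_apply_left hab, pairProfile_apply_right hab, Set.ofPred_mem_eq,
      Set.compl_def] using this
  · intro h P hP a b hind hstr
    rcases eq_or_ne a b with rfl | hab
    · exact (hC.isPPO P hP).1 a
    refine h.mono hA hC ?_ ?_ a b hab P hP rfl rfl
    · rintro i (hi | hi)
      exacts [(hind i hi).1, (hstr i hi).1]
    · exact fun i hi hiJ => (hstr i hiJ).2 hi

lemma RelDecisive.mono (hA : ThreeAlts A) (hC : IsArrovian_s14 C) (h : RelDecisive C N J)
    (hJ : J ⊆ Nᶜ) {N' J' : Set I} (hJ' : J' ⊆ N'ᶜ) (hN : N ⊆ N' ∪ J') (hJJ' : J ⊆ J') :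
    RelDecisive C N' J' :=
  (relDecisive_iff_wins hA hC hJ').2 <| ((relDecisive_iff_wins hA hC hJ).1 h).mono hA hC
    (Set.union_subset hN (hJJ'.trans Set.subset_union_right)) (Set.compl_subset_compl.2 hJJ')

lemma IsArrovian_s14.relDecisive_of_apply (hA : ThreeAlts A) (hC : IsArrovian_s14 C)
    {P : I → A → A → Prop} (hP : IsPPOProfile P) {a b : A} (h : C P a b) :
    RelDecisive C {i | Indiff (P i) a b} {i | StrictPref (P i) a b} := by
  rcases eq_or_ne a b with rfl | hab
  · intro Q hQ x y hxy _
    exact hC.unanimity Q hQ x y fun i => (hxy i ⟨(hP i).1 a, (hP i).1 a⟩).1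
  refine (relDecisive_iff_wins hA hC fun i hi hi' => hi.2 hi'.2).2 ?_
  convert (hC.wins_of_apply hA hP hab h).union_compl hA hC using 1 <;> ext i <;>
    simp only [Indiff, StrictPref, Set.mem_union, Set.mem_ofPred_eq, Set.mem_compl_iff] <;> tauto

end RelDecisive

section CoalitionStructure

variable {C : (I → A → A → Prop) → A → A → Prop} {δ Δ : Set I → Set I}

lemma MinRelDecisive.union_subset_union (hA : ThreeAlts A) (hC : IsArrovian_s14 C)
    (hδ : MinRelDecisive C δ) {M N : Set I} (hMN : M ⊆ N) : δ M ∪ M ⊆ δ N ∪ N := by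
  have hδM : δ M ⊆ (δ N ∪ N) \ M := by
    refine (hδ M).2.2 _ (fun _ hj => hj.2) ((hδ N).2.1.mono hA hC (hδ N).1 (fun _ hj => hj.2)
      (fun i hi => ?_) (fun i hi => ⟨Or.inl hi, fun hiM => (hδ N).1 hi (hMN hiM)⟩))
    by_cases hiM : i ∈ M
    exacts [Or.inl hiM, Or.inr ⟨Or.inr hi, hiM⟩]
  exact Set.union_subset (hδM.trans Set.sdiff_subset) (hMN.trans Set.subset_union_right)

lemma MinRelDecisive.apply_union_of_inter_eq_empty (hA : ThreeAlts A) (hC : IsArrovian_s14 C)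
    (hδ : MinRelDecisive C δ) {N M : Set I} (hM : (δ N ∪ N) ∩ M = ∅) : δ (N ∪ M) = δ N := by
  have hM' : ∀ i ∈ M, i ∉ δ N ∧ i ∉ N := fun i hiM =>
    ⟨fun hi => hM.subset ⟨Or.inl hi, hiM⟩, fun hi => hM.subset ⟨Or.inr hi, hiM⟩⟩
  have hδN : δ N ⊆ (N ∪ M)ᶜ := by
    rintro i hi (hiN | hiM)
    exacts [(hδ N).1 hi hiN, (hM' i hiM).1 hi]
  have hle : δ (N ∪ M) ⊆ δ N := (hδ (N ∪ M)).2.2 _ hδN <|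
    (hδ N).2.1.mono hA hC (hδ N).1 hδN (Set.subset_union_left.trans Set.subset_union_left)
      subset_rfl
  have hge : δ N ⊆ δ (N ∪ M) ∪ M := by
    have hsub : δ (N ∪ M) ∪ M ⊆ Nᶜ := Set.union_subset
      (fun i hi hiN => (hδ (N ∪ M)).1 hi (Or.inl hiN)) fun i hiM => (hM' i hiM).2
    refine (hδ N).2.2 _ hsub ((hδ (N ∪ M)).2.1.mono hA hC (hδ (N ∪ M)).1 hsub ?_
      Set.subset_union_left)
    rintro i (hiN | hiM)
    exacts [Or.inl hiN, Or.inr (Or.inr hiM)]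
  exact hle.antisymm fun i hi => (hge hi).resolve_right fun hiM => (hM' i hiM).1 hi

lemma MinRelDecisive.apply_iff (hA : ThreeAlts A) (hC : IsArrovian_s14 C)
    (hδ : MinRelDecisive C δ) {P : I → A → A → Prop} (hP : IsPPOProfile P) (a b : A) :
    C P a b ↔ ∃ N : Set I, (∀ i ∈ N, Indiff (P i) a b) ∧ ∀ j ∈ δ N, StrictPref (P j) a b := by
  refine ⟨fun h => ⟨{i | Indiff (P i) a b}, fun i hi => hi, fun j hj => ?_⟩,
    fun ⟨N, hN, hδN⟩ => (hδ N).2.1 P hP a b hN hδN⟩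
  exact (hδ _).2.2 _ (fun i hi hi' => hi.2 hi'.2) (hC.relDecisive_of_apply hA hP h) hj

lemma MinRelDecisive.coalStruct (hA : ThreeAlts A) (hC : IsArrovian_s14 C)
    (hδ : MinRelDecisive C δ) : CoalStruct C fun N => δ N ∪ N := by
  refine ⟨⟨fun N => Set.subset_union_right, fun M N => hδ.union_subset_union hA hC⟩,
    fun N M hM => ?_, fun P hP a b => ?_⟩
  · change δ (N ∪ M) ∪ (N ∪ M) = δ N ∪ N ∪ M
    rw [hδ.apply_union_of_inter_eq_empty hA hC hM, Set.union_assoc]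
  · have hδN : ∀ N, δ N \ N = δ N := fun N =>
      sdiff_eq_left.2 (Set.subset_compl_iff_disjoint_right.1 (hδ N).1)
    simp only [Set.union_sdiff_right, hδN]
    exact hδ.apply_iff hA hC hP a b

lemma CoalStruct.relDecisive (hΔ : CoalStruct C Δ) (N : Set I) : RelDecisive C N (Δ N \ N) :=
  fun P hP a b hN hJ => (hΔ.2.2 P hP a b).2 ⟨N, hN, hJ⟩

lemma CoalStruct.subset_union_of_relDecisive (hΔ : CoalStruct C Δ) {a b : A} (hab : a ≠ b)
    {N J : Set I} (hJ : J ⊆ Nᶜ) (h : RelDecisive C N J) : Δ N ⊆ J ∪ N := by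
  obtain ⟨M, hM, hΔM⟩ := (hΔ.2.2 _ (isPPOProfile_pairProfile a b N J) a b).1
    (h.apply_pairProfile hJ hab)
  have hMN : M ⊆ N := fun i hi => (indiff_pairProfile hab hJ).1 (hM i hi)
  have hΔMJ : Δ M \ M ⊆ J := fun j hj => (strictPref_pairProfile hab).1 (hΔM j hj)
  have hdisj : Δ M ∩ (N \ M) = ∅ :=
    Set.eq_empty_of_forall_notMem fun i ⟨hi, hiN, hiM⟩ => hJ (hΔMJ ⟨hi, hiM⟩) hiN
  calc Δ N = Δ M ∪ (N \ M) := by rw [← hΔ.2.1 M _ hdisj, Set.union_sdiff_cancel hMN]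
    _ ⊆ J ∪ N := by
      refine Set.union_subset (fun i hi => ?_) (Set.sdiff_subset.trans Set.subset_union_right)
      by_cases hiM : i ∈ M
      exacts [Or.inr (hMN hiM), Or.inl (hΔMJ ⟨hi, hiM⟩)]

lemma CoalStruct.eq_of_minRelDecisive (hΔ : CoalStruct C Δ) (hδ : MinRelDecisive C δ)
    {a b : A} (hab : a ≠ b) : Δ = fun N => δ N ∪ N :=
  funext fun N => (hΔ.subset_union_of_relDecisive hab (hδ N).1 (hδ N).2.1).antisymm <|
    Set.union_subset (((hδ N).2.2 _ (fun _ hj => hj.2) (hΔ.relDecisive N)).trans Set.sdiff_subset)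
      (hΔ.1.1 N)

end CoalitionStructure

theorem classification_of_arrovian_juntas_general (C : (I → A → A → Prop) → A → A → Prop)
    (hA : ThreeAlts A)
    (hC : ∀ P, IsPPOProfile P → IsPPO (C P))
    (hU : Unanimity C) (hIIA : IIA C)
    (δ : Set I → Set I) (hδ : MinRelDecisive C δ) :
    CoalStruct C (fun N => δ N ∪ N) ∧
    ∀ Δ' : Set I → Set I, CoalStruct C Δ' → Δ' = fun N => δ N ∪ N := by
  have hArrow : IsArrovian_s14 C := ⟨hC, hU, hIIA⟩
  obtain ⟨a, b, -, hab, -⟩ := id hA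
  exact ⟨hδ.coalStruct hA hArrow, fun Δ' hΔ' => hΔ'.eq_of_minRelDecisive hδ hab⟩

theorem classification_of_arrovian_juntas [Fintype I] (C : (I → A → A → Prop) → A → A → Prop)
    (hA : ThreeAlts A)
    (hC : ∀ P, IsPPOProfile P → IsPPO (C P))
    (hU : Unanimity C) (hIIA : IIA C)
    (δ : Set I → Set I) (hδ : MinRelDecisive C δ) :
    CoalStruct C (fun N => δ N ∪ N) ∧
    ∀ Δ' : Set I → Set I, CoalStruct C Δ' → Δ' = fun N => δ N ∪ N :=
  classification_of_arrovian_juntas_general C hA hC hU hIIA δ hδ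
end
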